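/- Let D be a divisor on a finite connected simple graph G with deg(D) ≤ g − 1. Then D is linearly equivalent to the divisor D_O of some partial orientation O of G if and only if r(D + 𝟙) ≥ 0, where 𝟙 is the all-ones divisor (equivalently, D + 𝟙 is linearly equivalent to an effective divisor). -/

import Mathlib

/-- A partial orientation of a simple graph `G`: each edge of some subset of the
edges of `G` is given a direction; `dir u v = true` means the edge `{u,v}` is
oriented from `u` towards `v`. -/
structure PartialOrientation {V : Type*} (G : SimpleGraph V) where
  dir : V → V → Bool
  adj_of_dir : ∀ u v, dir u v = true → G.Adj u v
  not_both : ∀ u v, dir u v = true → dir v u = false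

namespace PartialOrientation

variable {V : Type*} {G : SimpleGraph V}

/-- The indegree of a vertex in a partial orientation. -/
def indeg [Fintype V] (O : PartialOrientation G) (v : V) : ℕ :=
  (Finset.univ.filter (fun u => O.dir u v = true)).card

/-- The divisor associated to a partial orientation: `D_O(v) = indeg(v) - 1`. -/
def div [Fintype V] (O : PartialOrientation G) (v : V) : ℤ :=
  (O.indeg v : ℤ) - 1

/-- A partial orientation is acyclic if it has no directed cycle (equivalently,
no vertex reaches itself by a nonempty directed walk). -/
def Acyclic (O : PartialOrientation G) : Prop :=
  ∀ v, ¬ Relation.TransGen (fun a b => O.dir a b = true) v v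

/-- A partial orientation is sourceless if every vertex has an incoming oriented edge. -/
def Sourceless (O : PartialOrientation G) : Prop :=
  ∀ v, ∃ u, O.dir u v = true

/-- A partial orientation is `q`-connected if every vertex is reachable from `q`
by a (possibly empty) directed path. -/
def QConnected (O : PartialOrientation G) (q : V) : Prop :=
  ∀ v, Relation.ReflTransGen (fun a b => O.dir a b = true) q v

/-- A partial orientation is full if every edge of `G` is oriented. -/
def IsFull (O : PartialOrientation G) : Prop :=
  ∀ u v, G.Adj u v → (O.dir u v = true ∨ O.dir v u = true)

/-- An edge pivot at a vertex `v`: an edge oriented towards `v` becomes unoriented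
and a previously unoriented edge incident to `v` becomes oriented towards `v`. -/
def EdgePivot (O O' : PartialOrientation G) : Prop :=
  ∃ v u w, O.dir u v = true ∧ G.Adj w v ∧ O.dir w v = false ∧ O.dir v w = false ∧
    ∀ a b, (O'.dir a b = true ↔
      ((a = w ∧ b = v) ∨ (O.dir a b = true ∧ ¬(a = u ∧ b = v))))

/-- A cycle reversal: all edges of a consistently oriented (directed) cycle are reversed. -/
def CycleReversal (O O' : PartialOrientation G) : Prop :=
  ∃ (n : ℕ) (σ : Fin (n + 1) → V), Function.Injective σ ∧
    (∀ i : Fin (n + 1), O.dir (σ i) (σ (i + 1)) = true) ∧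
    ∀ a b, (O'.dir a b = true ↔
      ((∃ i : Fin (n + 1), a = σ (i + 1) ∧ b = σ i) ∨
        (O.dir a b = true ∧ ¬ ∃ i : Fin (n + 1), a = σ i ∧ b = σ (i + 1))))

/-- A directed path reversal: all edges of a directed path are reversed. -/
def PathReversal (O O' : PartialOrientation G) : Prop :=
  ∃ (n : ℕ) (σ : Fin (n + 1) → V), Function.Injective σ ∧
    (∀ i : Fin n, O.dir (σ i.castSucc) (σ i.succ) = true) ∧
    ∀ a b, (O'.dir a b = true ↔
      ((∃ i : Fin n, a = σ i.succ ∧ b = σ i.castSucc) ∨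
        (O.dir a b = true ∧ ¬ ∃ i : Fin n, a = σ i.castSucc ∧ b = σ i.succ)))

/-- A cocycle (cut) reversal: all edges of a cut `(S, V∖S)` in which every edge of
the cut is oriented, all towards `S`, are reversed. -/
def CocycleReversal (O O' : PartialOrientation G) : Prop :=
  ∃ S : Set V,
    (∀ u v, G.Adj u v → u ∉ S → v ∈ S → O.dir u v = true) ∧
    ∀ a b, (O'.dir a b = true ↔
      ((a ∈ S ∧ b ∉ S ∧ O.dir b a = true) ∨
        ((a ∈ S ↔ b ∈ S) ∧ O.dir a b = true)))

/-- Equivalence in the generalized cycle reversal system: a finite sequence of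
edge pivots and cycle reversals. -/
def GenCycleEquiv (O O' : PartialOrientation G) : Prop :=
  Relation.ReflTransGen (fun A B => EdgePivot A B ∨ CycleReversal A B) O O'

/-- Equivalence in the generalized cocycle reversal system: a finite sequence of
edge pivots and cocycle reversals. -/
def GenCocycleEquiv (O O' : PartialOrientation G) : Prop :=
  Relation.ReflTransGen (fun A B => EdgePivot A B ∨ CocycleReversal A B) O O'

/-- Equivalence in the generalized cycle-cocycle reversal system: a finite sequence
of edge pivots, cycle reversals and cocycle reversals. -/
def GenCycleCocycleEquiv (O O' : PartialOrientation G) : Prop :=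
  Relation.ReflTransGen
    (fun A B => EdgePivot A B ∨ CycleReversal A B ∨ CocycleReversal A B) O O'

/-- Equivalence in the (plain) cocycle reversal system: a finite sequence of
cocycle reversals. -/
def CocycleEquiv (O O' : PartialOrientation G) : Prop :=
  Relation.ReflTransGen (fun A B => CocycleReversal A B) O O'

end PartialOrientation

/-- The degree of a divisor: the total number of chips. -/
def degDiv {V : Type*} [Fintype V] (D : V → ℤ) : ℤ := ∑ v, D v

/-- `deg⁺` of a divisor: the sum of its positive values. -/
def degPlus {V : Type*} [Fintype V] (D : V → ℤ) : ℤ := ∑ v, max (D v) 0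

/-- A divisor is effective if all of its values are nonnegative. -/
def EffectiveDiv {V : Type*} (D : V → ℤ) : Prop := ∀ v, 0 ≤ D v

/-- Linear equivalence of divisors: `D - D'` lies in the ℤ-span of the columns of
the Laplacian, i.e. there is an integral firing vector `f` with
`D - D' = Δ f`. -/
def LinEquiv {V : Type*} [Fintype V] (G : SimpleGraph V) [DecidableRel G.Adj]
    (D D' : V → ℤ) : Prop :=
  ∃ f : V → ℤ, ∀ v, D v - D' v = ∑ u ∈ Finset.univ.filter (fun u => G.Adj v u), (f v - f u)

/-- The Baker–Norine rank of a divisor: one less than the minimal degree of an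
effective divisor `E` such that `D - E` is not linearly equivalent to any
effective divisor.  In particular `divisorRank G D = -1` iff `D` is not linearly
equivalent to an effective divisor. -/
noncomputable def divisorRank {V : Type*} [Fintype V] (G : SimpleGraph V)
    [DecidableRel G.Adj] (D : V → ℤ) : ℤ :=
  ((sInf { n : ℕ | ∃ E : V → ℤ, EffectiveDiv E ∧ degDiv E = (n : ℤ) ∧
      ¬ ∃ E' : V → ℤ, EffectiveDiv E' ∧ LinEquiv G (fun v => D v - E v) E' } : ℕ) : ℤ) - 1

/-- The genus (cyclomatic number) of a graph: `g = |E| - |V| + 1`. -/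
def graphGenus {V : Type*} [Fintype V] [DecidableEq V] (G : SimpleGraph V)
    [DecidableRel G.Adj] : ℤ :=
  (G.edgeFinset.card : ℤ) - (Fintype.card V : ℤ) + 1

/-- The number of edges of the induced subgraph `G[T]`. -/
def inducedEdgeCount {V : Type*} [Fintype V] [DecidableEq V] (G : SimpleGraph V)
    [DecidableRel G.Adj] (T : Finset V) : ℕ :=
  (G.edgeFinset.filter (fun e => e ∈ T.sym2)).card

/-- `χ̄(S, D) = |E| - |E(G[V∖S])| - |S| - deg(D|_S)`. -/
def chiBar {V : Type*} [Fintype V] [DecidableEq V] (G : SimpleGraph V)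
    [DecidableRel G.Adj] (D : V → ℤ) (S : Finset V) : ℤ :=
  (G.edgeFinset.card : ℤ) - (inducedEdgeCount G Sᶜ : ℤ) - (S.card : ℤ) - ∑ v ∈ S, D v

/-- `outdeg_A(v)`: the number of edges joining `v` to vertices outside `A`. -/
def outdegOf {V : Type*} [Fintype V] [DecidableEq V] (G : SimpleGraph V) [DecidableRel G.Adj]
    (A : Finset V) (v : V) : ℕ :=
  (Finset.univ.filter (fun u => G.Adj v u ∧ u ∉ A)).card

/-- A divisor `D` is `q`-reduced if `D(v) ≥ 0` for `v ≠ q` and every nonempty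
set `A ⊆ V ∖ {q}` contains a vertex sent into debt by firing `A`. -/
def QReduced {V : Type*} [Fintype V] [DecidableEq V] (G : SimpleGraph V) [DecidableRel G.Adj]
    (q : V) (D : V → ℤ) : Prop :=
  (∀ v, v ≠ q → 0 ≤ D v) ∧
    ∀ A : Finset V, A.Nonempty → q ∉ A → ∃ v ∈ A, D v - (outdegOf G A v : ℤ) < 0

/-- The canonical divisor `K(v) = deg(v) - 2`. -/
def canonicalDiv {V : Type*} [Fintype V] (G : SimpleGraph V) [DecidableRel G.Adj]
    (v : V) : ℤ :=
  (G.degree v : ℤ) - 2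



section BackmanAux
set_option linter.unusedSectionVars false
set_option linter.unusedVariables false
open Finset
variable {V : Type*} [Fintype V] [DecidableEq V] (G : SimpleGraph V) [DecidableRel G.Adj]

theorem linEquiv_refl (D : V → ℤ) : LinEquiv G D D :=
  ⟨0, fun v => by simp⟩

theorem linEquiv_symm {D D' : V → ℤ} (h : LinEquiv G D D') : LinEquiv G D' D := by
  obtain ⟨f, hf⟩ := h
  refine ⟨-f, fun v => ?_⟩
  have := hf v
  have h2 : ∑ u ∈ Finset.univ.filter (fun u => G.Adj v u), ((-f) v - (-f) u)
      = -∑ u ∈ Finset.univ.filter (fun u => G.Adj v u), (f v - f u) := by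
    rw [← Finset.sum_neg_distrib]
    exact Finset.sum_congr rfl fun u _ => by simp; ring
  rw [h2]; linarith

theorem linEquiv_trans {D D' D'' : V → ℤ} (h : LinEquiv G D D') (h' : LinEquiv G D' D'') :
    LinEquiv G D D'' := by
  obtain ⟨f, hf⟩ := h; obtain ⟨g, hg⟩ := h'
  refine ⟨f + g, fun v => ?_⟩
  have h2 : ∑ u ∈ Finset.univ.filter (fun u => G.Adj v u), ((f+g) v - (f+g) u)
      = (∑ u ∈ Finset.univ.filter (fun u => G.Adj v u), (f v - f u))
        + ∑ u ∈ Finset.univ.filter (fun u => G.Adj v u), (g v - g u) := by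
    rw [← Finset.sum_add_distrib]
    exact Finset.sum_congr rfl fun u _ => by simp; ring
  rw [h2, ← hf v, ← hg v]; ring

/-- degree invariance -/
theorem linEquiv_degree {D D' : V → ℤ} (h : LinEquiv G D D') : ∑ v, D v = ∑ v, D' v := by
  obtain ⟨f, hf⟩ := h
  have key : ∑ v, (D v - D' v) = ∑ v, ∑ u ∈ Finset.univ.filter (fun u => G.Adj v u), (f v - f u) :=
    Finset.sum_congr rfl fun v _ => hf v
  have h1 : ∀ (g : V → ℤ), ∑ v, ∑ u ∈ Finset.univ.filter (fun u => G.Adj v u), (g v - g u)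
      = ∑ v, ∑ u, if G.Adj v u then g v - g u else 0 := fun g =>
    Finset.sum_congr rfl fun v _ => (Finset.sum_filter _ _)
  set T := ∑ v, ∑ u, if G.Adj v u then f v - f u else 0 with hT
  have h3 : T = -T := by
    have this1 : ∀ u v : V, (if G.Adj v u then f v - f u else 0) = -(if G.Adj u v then f u - f v else 0) := by
      intro u v
      by_cases h : G.Adj v u
      · rw [if_pos h, if_pos h.symm]; ring
      · rw [if_neg h, if_neg (fun h' => h h'.symm)]; ring
    conv_lhs => rw [hT]
    calc ∑ v, ∑ u, (if G.Adj v u then f v - f u else 0)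
        = ∑ v, ∑ u, -(if G.Adj u v then f u - f v else 0) :=
          Finset.sum_congr rfl fun v _ => Finset.sum_congr rfl fun u _ => this1 u v
      _ = -∑ v, ∑ u, (if G.Adj u v then f u - f v else 0) := by
          rw [← Finset.sum_neg_distrib]
          exact Finset.sum_congr rfl fun v _ => by rw [← Finset.sum_neg_distrib]
      _ = -T := by rw [hT, Finset.sum_comm]
  have h4 : T = 0 := by omega
  have h5 : ∑ v, (D v - D' v) = 0 := by rw [key, h1, ← hT, h4]
  rw [Finset.sum_sub_distrib] at h5; omega


/-- number of edges meeting `A` -/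
def inc (A : Finset V) : ℕ := (G.edgeFinset.filter (fun e => ∃ v ∈ A, v ∈ e)).card

theorem incZ (A : Finset V) :
    (inc G A : ℤ) = ∑ e ∈ G.edgeFinset, (if ∃ v ∈ A, v ∈ e then 1 else 0) := by
  rw [inc, Finset.card_filter]; push_cast; rfl

def fE (E : V → ℤ) (A : Finset V) : ℤ := (inc G A : ℤ) - ∑ v ∈ A, E v

theorem meets_union (X Y : Finset V) (e : Sym2 V) :
    (∃ v ∈ X ∪ Y, v ∈ e) ↔ (∃ v ∈ X, v ∈ e) ∨ (∃ v ∈ Y, v ∈ e) := by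
  constructor
  · rintro ⟨v, hv, hve⟩
    rcases Finset.mem_union.mp hv with h | h
    · exact Or.inl ⟨v, h, hve⟩
    · exact Or.inr ⟨v, h, hve⟩
  · rintro (⟨v, hv, hve⟩ | ⟨v, hv, hve⟩)
    · exact ⟨v, Finset.mem_union_left _ hv, hve⟩
    · exact ⟨v, Finset.mem_union_right _ hv, hve⟩

theorem meets_inter (X Y : Finset V) (e : Sym2 V) :
    (∃ v ∈ X ∩ Y, v ∈ e) → (∃ v ∈ X, v ∈ e) ∧ (∃ v ∈ Y, v ∈ e) := by
  rintro ⟨v, hv, hve⟩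
  exact ⟨⟨v, (Finset.mem_inter.mp hv).1, hve⟩, ⟨v, (Finset.mem_inter.mp hv).2, hve⟩⟩

theorem inc_submod (X Y : Finset V) :
    (inc G (X ∪ Y) : ℤ) + inc G (X ∩ Y) ≤ inc G X + inc G Y := by
  rw [incZ, incZ, incZ, incZ, ← Finset.sum_add_distrib, ← Finset.sum_add_distrib]
  refine Finset.sum_le_sum fun e _ => ?_
  have hu := meets_union X Y e
  have hi := meets_inter X Y e
  by_cases h1 : ∃ v ∈ X, v ∈ e <;> by_cases h2 : ∃ v ∈ Y, v ∈ e
  · rw [if_pos h1, if_pos h2, if_pos (hu.mpr (Or.inl h1))]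
    split_ifs <;> norm_num
  · rw [if_pos h1, if_neg h2, if_pos (hu.mpr (Or.inl h1)),
      if_neg (fun hc => h2 (hi hc).2)]
  · rw [if_neg h1, if_pos h2, if_pos (hu.mpr (Or.inr h2)),
      if_neg (fun hc => h1 (hi hc).1)]
    norm_num
  · rw [if_neg h1, if_neg h2, if_neg (fun hc => (hu.mp hc).elim h1 h2),
      if_neg (fun hc => h1 (hi hc).1)]

theorem sum_modular (E : V → ℤ) (X Y : Finset V) :
    ∑ v ∈ X ∪ Y, E v + ∑ v ∈ X ∩ Y, E v = ∑ v ∈ X, E v + ∑ v ∈ Y, E v :=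
  Finset.sum_union_inter

theorem fE_submod (E : V → ℤ) (X Y : Finset V) :
    fE G E (X ∪ Y) + fE G E (X ∩ Y) ≤ fE G E X + fE G E Y := by
  have h1 := inc_submod G X Y
  have h2 := sum_modular E X Y
  simp only [fE]; linarith

noncomputable def mu (E : V → ℤ) : ℤ :=
  (Finset.univ : Finset (Finset V)).inf' ⟨∅, Finset.mem_univ ∅⟩ (fE G E)

theorem mu_le (E : V → ℤ) (A : Finset V) : mu G E ≤ fE G E A :=
  Finset.inf'_le _ (Finset.mem_univ A)

theorem mu_nonpos (E : V → ℤ) : mu G E ≤ 0 := by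
  have := mu_le G E ∅
  simpa [fE, inc] using this

theorem exists_mu (E : V → ℤ) : ∃ A, fE G E A = mu G E := by
  obtain ⟨A, _, hA⟩ := Finset.exists_mem_eq_inf' ⟨∅, Finset.mem_univ ∅⟩ (fE G E)
  exact ⟨A, hA.symm⟩

noncomputable def Astar (E : V → ℤ) : Finset V :=
  ((Finset.univ : Finset (Finset V)).filter (fun A => fE G E A = mu G E)).sup id

theorem subset_Astar (E : V → ℤ) {B : Finset V} (hB : fE G E B = mu G E) : B ⊆ Astar G E := by
  have hmem : B ∈ (Finset.univ : Finset (Finset V)).filter (fun A => fE G E A = mu G E) :=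
    Finset.mem_filter.mpr ⟨Finset.mem_univ B, hB⟩
  exact Finset.le_sup (f := id) hmem

theorem Astar_min (E : V → ℤ) (h : mu G E < 0) : fE G E (Astar G E) = mu G E := by
  have hp : (fE G E (Astar G E) = mu G E) ∨ (Astar G E = ∅) := by
    refine Finset.sup_induction (p := fun X => fE G E X = mu G E ∨ X = ∅)
      (Or.inr Finset.bot_eq_empty) ?_ ?_
    · rintro a (ha | ha) b (hb | hb)
      · left
        have h1 := fE_submod G E a b
        have h2 := mu_le G E (a ∪ b)
        have h3 := mu_le G E (a ∩ b)
        rw [Finset.sup_eq_union]; omega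
      · left; subst hb; simpa using ha
      · left; subst ha; simpa using hb
      · right; subst ha; subst hb; exact Finset.union_empty _
    · intro A hA
      exact Or.inl (Finset.mem_filter.mp hA).2
  rcases hp with hp | hp
  · exact hp
  · exfalso
    obtain ⟨A, hA⟩ := exists_mu G E
    have hAne : A ≠ ∅ := by
      rintro rfl
      have : fE G E ∅ = 0 := by simp [fE, inc]
      omega
    have := subset_Astar G E hA
    rw [hp, Finset.subset_empty] at this
    exact hAne this


theorem sum_adj_swap (H : V → V → ℤ) :
    ∑ v, ∑ u ∈ Finset.univ.filter (fun u => G.Adj v u), H v u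
      = ∑ v, ∑ u ∈ Finset.univ.filter (fun u => G.Adj v u), H u v := by
  have l1 : ∑ v, ∑ u ∈ Finset.univ.filter (fun u => G.Adj v u), H v u
      = ∑ v, ∑ u, if G.Adj v u then H v u else 0 :=
    Finset.sum_congr rfl fun v _ => Finset.sum_filter _ _
  have l2 : ∑ v, ∑ u ∈ Finset.univ.filter (fun u => G.Adj v u), H u v
      = ∑ v, ∑ u, if G.Adj v u then H u v else 0 :=
    Finset.sum_congr rfl fun v _ => Finset.sum_filter _ _
  rw [l1, l2, Finset.sum_comm]
  refine Finset.sum_congr rfl fun v _ => Finset.sum_congr rfl fun u _ => ?_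
  by_cases h : G.Adj v u
  · rw [if_pos h, if_pos h.symm]
  · rw [if_neg h, if_neg (fun h' => h h'.symm)]

theorem sum_adj_eq_two_mul_edge (F : V → V → ℤ) (hsym : ∀ u v, F u v = F v u) :
    ∑ v, ∑ u ∈ Finset.univ.filter (fun u => G.Adj v u), F v u
      = 2 * ∑ e ∈ G.edgeFinset, Sym2.lift ⟨F, hsym⟩ e := by
  classical
  have h1 : ∑ d : G.Dart, Sym2.lift ⟨F, hsym⟩ d.edge
      = ∑ v, ∑ u ∈ Finset.univ.filter (fun u => G.Adj v u), F v u := by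
    rw [← Finset.sum_fiberwise_of_maps_to (g := fun d : G.Dart => d.fst)
      (fun d _ => Finset.mem_univ d.fst)]
    refine Finset.sum_congr rfl fun v _ => ?_
    rw [show (Finset.univ.filter fun d : G.Dart => d.fst = v) = Finset.univ.image (G.dartOfNeighborSet v) from G.dart_fst_fiber v]
    rw [Finset.sum_image (fun a _ b _ h => G.dartOfNeighborSet_injective v h)]
    rw [← SimpleGraph.neighborFinset_eq_filter]
    rw [Finset.sum_subtype (G.neighborFinset v) (fun u => SimpleGraph.mem_neighborFinset G v u)
      (fun u => F v u)]
    rfl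
  have h2 : ∑ d : G.Dart, Sym2.lift ⟨F, hsym⟩ d.edge
      = ∑ e ∈ G.edgeFinset, 2 * Sym2.lift ⟨F, hsym⟩ e := by
    rw [← Finset.sum_fiberwise_of_maps_to (t := G.edgeFinset) (g := fun d : G.Dart => d.edge)
      (fun d _ => by rw [SimpleGraph.mem_edgeFinset]; exact d.edge_mem)]
    refine Finset.sum_congr rfl fun e he => ?_
    have hcard : (Finset.univ.filter fun d : G.Dart => d.edge = e).card = 2 :=
      G.dart_edge_fiber_card e (SimpleGraph.mem_edgeFinset.mp he)
    rw [Finset.sum_congr rfl (fun d hd => by rw [(Finset.mem_filter.mp hd).2])]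
    rw [Finset.sum_const, hcard]
    simp [two_mul]
  rw [← h1, h2, Finset.mul_sum]

def chi (A : Finset V) (v : V) : ℤ := if v ∈ A then 1 else 0

def fire (A : Finset V) (E : V → ℤ) : V → ℤ :=
  fun v => E v - ∑ u ∈ Finset.univ.filter (fun u => G.Adj v u), (chi A v - chi A u)

theorem chi_symm_mul (A B : Finset V) (u v : V) :
    (fun u v => (chi A u - chi A v) * (chi B u - chi B v)) u v
    = (fun u v => (chi A u - chi A v) * (chi B u - chi B v)) v u := by ring

theorem delta_eq (A B : Finset V) (E : V → ℤ) :
    ∑ v ∈ B, (E v - fire G A E v)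
      = ∑ e ∈ G.edgeFinset,
        Sym2.lift ⟨fun u v => (chi A u - chi A v) * (chi B u - chi B v), chi_symm_mul A B⟩ e := by
  have step0 : ∑ v ∈ B, (E v - fire G A E v)
      = ∑ v ∈ B, ∑ u ∈ Finset.univ.filter (fun u => G.Adj v u), (chi A v - chi A u) := by
    refine Finset.sum_congr rfl fun v _ => ?_
    simp [fire]
  have step1 : ∑ v ∈ B, ∑ u ∈ Finset.univ.filter (fun u => G.Adj v u), (chi A v - chi A u)
      = ∑ v, ∑ u ∈ Finset.univ.filter (fun u => G.Adj v u), chi B v * (chi A v - chi A u) := by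
    calc ∑ v ∈ B, ∑ u ∈ Finset.univ.filter (fun u => G.Adj v u), (chi A v - chi A u)
        = ∑ v ∈ Finset.univ ∩ B, ∑ u ∈ Finset.univ.filter (fun u => G.Adj v u), (chi A v - chi A u) := by
          rw [Finset.univ_inter]
      _ = ∑ v, if v ∈ B then ∑ u ∈ Finset.univ.filter (fun u => G.Adj v u), (chi A v - chi A u) else 0 := by
          rw [Finset.sum_ite_mem]
      _ = ∑ v, ∑ u ∈ Finset.univ.filter (fun u => G.Adj v u), chi B v * (chi A v - chi A u) := by
          refine Finset.sum_congr rfl fun v _ => ?_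
          by_cases hv : v ∈ B
          · rw [if_pos hv]
            refine Finset.sum_congr rfl fun u _ => ?_
            have : chi B v = 1 := by rw [chi, if_pos hv]
            rw [this, one_mul]
          · rw [if_neg hv, eq_comm, Finset.sum_eq_zero]
            intro u _
            have : chi B v = 0 := by rw [chi, if_neg hv]
            rw [this, zero_mul]
  have hswap := sum_adj_swap G (fun v u => chi B v * (chi A v - chi A u))
  have hdouble : (∑ v, ∑ u ∈ Finset.univ.filter (fun u => G.Adj v u), chi B v * (chi A v - chi A u))
      + (∑ v, ∑ u ∈ Finset.univ.filter (fun u => G.Adj v u), chi B u * (chi A u - chi A v))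
      = ∑ v, ∑ u ∈ Finset.univ.filter (fun u => G.Adj v u),
          (fun u v => (chi A u - chi A v) * (chi B u - chi B v)) v u := by
    rw [← Finset.sum_add_distrib]
    refine Finset.sum_congr rfl fun v _ => ?_
    rw [← Finset.sum_add_distrib]
    refine Finset.sum_congr rfl fun u _ => ?_
    ring
  have hedge := sum_adj_eq_two_mul_edge G _ (chi_symm_mul A B)
  rw [hedge] at hdouble
  rw [step0, step1]
  omega

theorem meets_pair (X : Finset V) (u v : V) :
    (∃ w ∈ X, w ∈ s(u, v)) ↔ u ∈ X ∨ v ∈ X := by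
  constructor
  · rintro ⟨w, hw, hwe⟩
    rcases Sym2.mem_iff.mp hwe with rfl | rfl
    · exact Or.inl hw
    · exact Or.inr hw
  · rintro (h | h)
    · exact ⟨u, h, Sym2.mem_mk_left u v⟩
    · exact ⟨v, h, Sym2.mem_mk_right u v⟩

theorem fE_fire (A B : Finset V) (E : V → ℤ) :
    fE G (fire G A E) B = fE G E B
      + ∑ e ∈ G.edgeFinset,
        Sym2.lift ⟨fun u v => (chi A u - chi A v) * (chi B u - chi B v), chi_symm_mul A B⟩ e := by
  have h := delta_eq G A B E
  rw [Finset.sum_sub_distrib] at h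
  simp only [fE]
  omega

theorem per_edge (A B : Finset V) (e : Sym2 V) :
    0 ≤ (if ∃ v ∈ B, v ∈ e then (1:ℤ) else 0)
      + Sym2.lift ⟨fun u v => (chi A u - chi A v) * (chi B u - chi B v), chi_symm_mul A B⟩ e
      + (if ∃ v ∈ A, v ∈ e then 1 else 0)
      - (if ∃ v ∈ B ∪ A, v ∈ e then 1 else 0)
      - (if ∃ v ∈ B ∩ A, v ∈ e then 1 else 0) := by
  refine Sym2.ind (fun u v => ?_) e
  rw [Sym2.lift_mk]
  simp only [meets_pair]
  simp only [Finset.mem_union, Finset.mem_inter]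
  by_cases hau : u ∈ A <;> by_cases hav : v ∈ A <;> by_cases hbu : u ∈ B <;> by_cases hbv : v ∈ B <;>
    simp [chi, hau, hav, hbu, hbv]

theorem key1 {E : V → ℤ} {A : Finset V} (hA : fE G E A = mu G E) (B : Finset V) :
    fE G E (B ∪ A) + fE G E (B ∩ A) ≤ fE G (fire G A E) B + mu G E := by
  rw [fE_fire, ← hA]
  have hsum : 0 ≤ ∑ e ∈ G.edgeFinset,
      ((if ∃ v ∈ B, v ∈ e then (1:ℤ) else 0)
      + Sym2.lift ⟨fun u v => (chi A u - chi A v) * (chi B u - chi B v), chi_symm_mul A B⟩ e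
      + (if ∃ v ∈ A, v ∈ e then 1 else 0)
      - (if ∃ v ∈ B ∪ A, v ∈ e then 1 else 0)
      - (if ∃ v ∈ B ∩ A, v ∈ e then 1 else 0)) :=
    Finset.sum_nonneg fun e _ => per_edge A B e
  have hexp : ∑ e ∈ G.edgeFinset,
      ((if ∃ v ∈ B, v ∈ e then (1:ℤ) else 0)
      + Sym2.lift ⟨fun u v => (chi A u - chi A v) * (chi B u - chi B v), chi_symm_mul A B⟩ e
      + (if ∃ v ∈ A, v ∈ e then 1 else 0)
      - (if ∃ v ∈ B ∪ A, v ∈ e then 1 else 0)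
      - (if ∃ v ∈ B ∩ A, v ∈ e then 1 else 0))
      = (inc G B : ℤ)
      + (∑ e ∈ G.edgeFinset, Sym2.lift ⟨fun u v => (chi A u - chi A v) * (chi B u - chi B v), chi_symm_mul A B⟩ e)
      + inc G A - inc G (B ∪ A) - inc G (B ∩ A) := by
    rw [incZ, incZ, incZ, incZ]
    rw [← Finset.sum_add_distrib, ← Finset.sum_add_distrib, ← Finset.sum_sub_distrib,
      ← Finset.sum_sub_distrib]
  rw [hexp] at hsum
  have hmod := sum_modular (V := V) E B A
  simp only [fE]
  linarith

theorem fire_nonneg_of_not_mem {A : Finset V} {E : V → ℤ} (hE : ∀ v, 0 ≤ E v) {v : V}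
    (hv : v ∉ A) : 0 ≤ fire G A E v := by
  have hsum : ∑ u ∈ Finset.univ.filter (fun u => G.Adj v u), (chi A v - chi A u) ≤ 0 := by
    refine Finset.sum_nonpos fun u _ => ?_
    rw [chi, if_neg hv]
    rw [chi]
    split_ifs <;> norm_num
  have := hE v
  rw [fire]
  omega

theorem fire_nonneg_of_mem {A : Finset V} {E : V → ℤ} (hE : ∀ v, 0 ≤ E v)
    (hmin : ∀ v ∈ A, fE G E A ≤ fE G E (A.erase v)) {v : V} (hv : v ∈ A) :
    0 ≤ fire G A E v := by
  -- the sum equals the number of neighbors outside A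
  have hsum : ∑ u ∈ Finset.univ.filter (fun u => G.Adj v u), (chi A v - chi A u)
      = ((Finset.univ.filter (fun u => G.Adj v u ∧ u ∉ A)).card : ℤ) := by
    have : ∀ u, chi A v - chi A u = if u ∉ A then 1 else 0 := by
      intro u
      rw [chi, if_pos hv, chi]
      split_ifs <;> norm_num
    rw [Finset.sum_congr rfl (fun u _ => this u), Finset.sum_boole, Finset.filter_filter]
  -- the number of neighbors outside A is at most inc A - inc (A.erase v)
  set S := Finset.univ.filter (fun u => G.Adj v u ∧ u ∉ A) with hS
  have hcard : (inc G (A.erase v) : ℤ) + S.card ≤ inc G A := by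
    set F1 := G.edgeFinset.filter (fun e => ∃ w ∈ A.erase v, w ∈ e) with hF1
    set F2 := S.image (fun u => s(v, u)) with hF2
    have hF2card : F2.card = S.card := by
      refine Finset.card_image_of_injOn fun a ha b hb hab => ?_
      have ha2 := Finset.mem_filter.mp (Finset.mem_coe.mp ha)
      rcases Sym2.eq_iff.mp hab with ⟨h1, h2⟩ | ⟨h1, h2⟩
      · exact h2
      · exact absurd h2 ha2.2.1.ne'
    have hdisj : Disjoint F1 F2 := by
      rw [Finset.disjoint_right]
      intro e heF2 heF1
      rw [hF2, Finset.mem_image] at heF2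
      obtain ⟨u, hu, rfl⟩ := heF2
      rw [hS, Finset.mem_filter] at hu
      rw [hF1, Finset.mem_filter] at heF1
      obtain ⟨-, w, hw, hwe⟩ := heF1
      rcases Sym2.mem_iff.mp hwe with rfl | rfl
      · exact (Finset.mem_erase.mp hw).1 rfl
      · exact hu.2.2 (Finset.mem_erase.mp hw).2
    have hsub : F1 ∪ F2 ⊆ G.edgeFinset.filter (fun e => ∃ w ∈ A, w ∈ e) := by
      intro e he
      rcases Finset.mem_union.mp he with he | he
      · rw [hF1, Finset.mem_filter] at he
        obtain ⟨h1, w, hw, hwe⟩ := he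
        exact Finset.mem_filter.mpr ⟨h1, w, Finset.mem_of_mem_erase hw, hwe⟩
      · rw [hF2, Finset.mem_image] at he
        obtain ⟨u, hu, rfl⟩ := he
        rw [hS, Finset.mem_filter] at hu
        refine Finset.mem_filter.mpr ⟨SimpleGraph.mem_edgeFinset.mpr hu.2.1, v, hv, Sym2.mem_mk_left v u⟩
    have := Finset.card_le_card hsub
    rw [Finset.card_union_of_disjoint hdisj, hF2card, hF1] at this
    rw [inc, inc]
    push_cast
    omega
  have hfE := hmin v hv
  rw [fE, fE, Finset.sum_erase_eq_sub hv] at hfE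
  rw [fire, hsum]
  omega

theorem exists_cross (hG : G.Connected) {A : Finset V} (hne : A.Nonempty) (hne' : A ≠ Finset.univ) :
    ∃ u v, G.Adj u v ∧ u ∈ A ∧ v ∉ A := by
  obtain ⟨a, ha⟩ := hne
  have : ∃ b, b ∉ A := by
    by_contra hc
    push_neg at hc
    exact hne' (Finset.eq_univ_iff_forall.mpr hc)
  obtain ⟨b, hb⟩ := this
  obtain ⟨p⟩ := hG.preconnected a b
  clear hne'
  induction p with
  | nil => exact absurd ha hb
  | @cons x y z h p ih =>
    by_cases hy : y ∈ A
    · exact ih hy hb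
    · exact ⟨x, y, h, ha, hy⟩

theorem cut_pos (hG : G.Connected) {A : Finset V} (hne : A.Nonempty) (hne' : A ≠ Finset.univ) :
    1 ≤ ∑ e ∈ G.edgeFinset,
      Sym2.lift ⟨fun u v => (chi A u - chi A v) * (chi A u - chi A v), chi_symm_mul A A⟩ e := by
  obtain ⟨u, v, hadj, huA, hvA⟩ := exists_cross G hG hne hne'
  have hmem : s(u, v) ∈ G.edgeFinset := SimpleGraph.mem_edgeFinset.mpr hadj
  have hval : Sym2.lift ⟨fun u v => (chi A u - chi A v) * (chi A u - chi A v), chi_symm_mul A A⟩ s(u, v) = 1 := by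
    rw [Sym2.lift_mk]
    simp [chi, huA, hvA]
  calc (1 : ℤ) = Sym2.lift _ s(u, v) := hval.symm
    _ ≤ _ := Finset.single_le_sum (fun e _ => ?_) hmem
  refine Sym2.ind (fun a b => ?_) e
  rw [Sym2.lift_mk]
  exact mul_self_nonneg _


theorem linEquiv_fire (A : Finset V) (E : V → ℤ) : LinEquiv G E (fire G A E) :=
  ⟨chi A, fun v => by simp [fire]⟩

theorem mu_fire_ge {E : V → ℤ} (h : mu G E < 0) :
    mu G E ≤ mu G (fire G (Astar G E) E) := by
  conv_rhs => rw [mu]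
  refine Finset.le_inf' _ _ fun B _ => ?_
  have hk := key1 G (Astar_min G E h) B
  have h1 := mu_le G E (B ∪ Astar G E)
  have h2 := mu_le G E (B ∩ Astar G E)
  linarith

theorem fire_minimizer_subset {E : V → ℤ} (h : mu G E < 0) {B : Finset V}
    (hB : fE G (fire G (Astar G E) E) B = mu G E) : B ⊆ Astar G E := by
  have hk := key1 G (Astar_min G E h) B
  have h1 := mu_le G E (B ∪ Astar G E)
  have h2 := mu_le G E (B ∩ Astar G E)
  have hcup : fE G E (B ∪ Astar G E) = mu G E := by linarith
  exact Finset.union_subset_iff.mp (subset_Astar G E hcup) |>.1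

theorem inc_univ : inc G Finset.univ = G.edgeFinset.card := by
  rw [inc, Finset.filter_true_of_mem]
  intro e _
  refine Sym2.ind (fun u v => ?_) e
  exact ⟨u, Finset.mem_univ u, Sym2.mem_mk_left u v⟩

theorem Astar_ne_empty {E : V → ℤ} (h : mu G E < 0) : (Astar G E).Nonempty := by
  rw [Finset.nonempty_iff_ne_empty]
  intro hc
  have := Astar_min G E h
  rw [hc] at this
  simp [fE, inc] at this
  omega

theorem Astar_ne_univ {E : V → ℤ} (h : mu G E < 0)
    (hdeg : ∑ v, E v ≤ (G.edgeFinset.card : ℤ)) : Astar G E ≠ Finset.univ := by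
  intro hc
  have := Astar_min G E h
  rw [hc, fE, inc_univ] at this
  omega

noncomputable def meas (E : V → ℤ) : ℕ :=
  (-(mu G E)).toNat * (Fintype.card V + 1) + (Astar G E).card

theorem main_exists (hG : G.Connected) (E : V → ℤ) (hE : ∀ v, 0 ≤ E v)
    (hdeg : ∑ v, E v ≤ (G.edgeFinset.card : ℤ)) :
    ∃ E' : V → ℤ, LinEquiv G E E' ∧ (∀ v, 0 ≤ E' v) ∧
      ∀ A : Finset V, ∑ v ∈ A, E' v ≤ (inc G A : ℤ) := by
  generalize hk : meas G E = k
  induction k using Nat.strong_induction_on generalizing E with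
  | _ k ih =>
  by_cases hmu : 0 ≤ mu G E
  · refine ⟨E, linEquiv_refl G E, hE, fun A => ?_⟩
    have := mu_le G E A
    rw [fE] at this
    omega
  · push_neg at hmu
    have hAmin : fE G E (Astar G E) = mu G E := Astar_min G E hmu
    have heff : ∀ v, 0 ≤ fire G (Astar G E) E v := by
      intro v
      by_cases hv : v ∈ Astar G E
      · exact fire_nonneg_of_mem G hE
          (fun w hw => by rw [hAmin]; exact mu_le G E ((Astar G E).erase w)) hv
      · exact fire_nonneg_of_not_mem G hE hv
    have hlin : LinEquiv G E (fire G (Astar G E) E) := linEquiv_fire G (Astar G E) E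
    have hdeg1 : ∑ v, fire G (Astar G E) E v ≤ (G.edgeFinset.card : ℤ) := by
      rw [← linEquiv_degree G hlin]; exact hdeg
    have hcut := cut_pos G hG (Astar_ne_empty G hmu) (Astar_ne_univ G hmu hdeg)
    have hfEA := fE_fire G (Astar G E) (Astar G E) E
    have hmu1le : mu G (fire G (Astar G E) E) ≤ 0 := mu_nonpos G _
    have hmu1ge : mu G E ≤ mu G (fire G (Astar G E) E) := mu_fire_ge G hmu
    have hmeas : meas G (fire G (Astar G E) E) < k := by
      rw [← hk]
      rcases eq_or_lt_of_le hmu1ge with heq | hlt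
      · -- same mu, Astar shrinks
        have hmu1 : mu G (fire G (Astar G E) E) < 0 := by omega
        have hsub : Astar G (fire G (Astar G E) E) ⊆ Astar G E := by
          refine fire_minimizer_subset G hmu ?_
          rw [heq]
          exact Astar_min G _ hmu1
        have hne : Astar G (fire G (Astar G E) E) ≠ Astar G E := by
          intro hc
          have h1 : fE G (fire G (Astar G E) E) (Astar G (fire G (Astar G E) E))
              = mu G (fire G (Astar G E) E) := Astar_min G _ hmu1
          rw [hc, hfEA, hAmin] at h1
          omega
        have hcard : (Astar G (fire G (Astar G E) E)).card < (Astar G E).card :=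
          Finset.card_lt_card (ssubset_of_subset_of_ne hsub hne)
        rw [meas, meas, ← heq]
        omega
      · -- mu strictly increased
        obtain ⟨a, ha⟩ : ∃ a : ℕ, (a : ℤ) = -(mu G E) := ⟨(-(mu G E)).toNat, Int.toNat_of_nonneg (by omega)⟩
        obtain ⟨b, hb⟩ : ∃ b : ℕ, (b : ℤ) = -(mu G (fire G (Astar G E) E)) :=
          ⟨(-(mu G (fire G (Astar G E) E))).toNat, Int.toNat_of_nonneg (by omega)⟩
        have hab : b < a := by omega
        rw [meas, meas]
        rw [show (-(mu G E)).toNat = a by omega, show (-(mu G (fire G (Astar G E) E))).toNat = b by omega]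
        have hc1 : (Astar G (fire G (Astar G E) E)).card ≤ Fintype.card V :=
          Finset.card_le_card (Finset.subset_univ _)
        have hstep : (b + 1) * (Fintype.card V + 1) ≤ a * (Fintype.card V + 1) :=
          Nat.mul_le_mul_right _ (by omega)
        have hexp : (b + 1) * (Fintype.card V + 1) = b * (Fintype.card V + 1) + (Fintype.card V + 1) := by
          ring
        omega
    obtain ⟨E', h1, h2, h3⟩ := ih (meas G (fire G (Astar G E) E)) hmeas _ heff hdeg1 rfl
    exact ⟨E', linEquiv_trans G hlin h1, h2, h3⟩

theorem orientation_of_hall (E' : V → ℤ) (hE' : ∀ v, 0 ≤ E' v)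
    (hall : ∀ A : Finset V, ∑ v ∈ A, E' v ≤ (inc G A : ℤ)) :
    ∃ O : PartialOrientation G, ∀ v, (O.indeg v : ℤ) = E' v := by
  classical
  set ι := Σ v : V, Fin ((E' v).toNat) with hι
  set t : ι → Finset (Sym2 V) := fun c => G.edgeFinset.filter (fun e => c.1 ∈ e) with ht
  have hHall : ∀ s : Finset ι, s.card ≤ (s.biUnion t).card := by
    intro s
    set A := s.image Sigma.fst with hA
    have hbu : s.biUnion t = G.edgeFinset.filter (fun e => ∃ v ∈ A, v ∈ e) := by
      ext e
      simp only [Finset.mem_biUnion, ht, Finset.mem_filter, hA, Finset.mem_image]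
      constructor
      · rintro ⟨c, hc, he, hce⟩
        exact ⟨he, c.1, ⟨c, hc, rfl⟩, hce⟩
      · rintro ⟨he, v, ⟨c, hc, rfl⟩, hve⟩
        exact ⟨c, hc, he, hve⟩
    have hsub : s ⊆ A.sigma (fun v => (Finset.univ : Finset (Fin ((E' v).toNat)))) := by
      intro c hc
      exact Finset.mem_sigma.mpr ⟨Finset.mem_image_of_mem _ hc, Finset.mem_univ _⟩
    have hle1 : s.card ≤ ∑ v ∈ A, (E' v).toNat := by
      have := Finset.card_le_card hsub
      rwa [Finset.card_sigma, Finset.sum_congr rfl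
        (fun v _ => by rw [Finset.card_univ, Fintype.card_fin])] at this
    have hle2 : ((∑ v ∈ A, (E' v).toNat : ℕ) : ℤ) = ∑ v ∈ A, E' v := by
      push_cast
      exact Finset.sum_congr rfl fun v _ => Int.toNat_of_nonneg (hE' v)
    have hle3 : (s.card : ℤ) ≤ (inc G A : ℤ) := by
      have := hall A
      omega
    rw [hbu]
    have : (inc G A : ℤ) = ((G.edgeFinset.filter (fun e => ∃ v ∈ A, v ∈ e)).card : ℤ) := by
      rw [inc]
    omega
  obtain ⟨f, hfinj, hft⟩ := (Finset.all_card_le_biUnion_card_iff_exists_injective t).mp hHall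
  have hfe : ∀ c : ι, f c ∈ G.edgeFinset ∧ c.1 ∈ f c := by
    intro c
    have := hft c
    rw [ht, Finset.mem_filter] at this
    exact this
  refine ⟨⟨fun u v => decide (G.Adj u v ∧ ∃ c : ι, c.1 = v ∧ f c = s(u, v)), ?_, ?_⟩, ?_⟩
  · intro u v h
    exact (of_decide_eq_true h).1
  · intro u v h
    obtain ⟨hadj, c, hcv, hfc⟩ := of_decide_eq_true h
    apply decide_eq_false
    rintro ⟨hadj', c', hc'u, hfc'⟩
    have : f c' = f c := by rw [hfc, hfc', Sym2.eq_swap]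
    have hcc : c' = c := hfinj this
    rw [hcc] at hc'u
    rw [hcv] at hc'u
    exact hadj.ne' hc'u
  · intro v
    rw [PartialOrientation.indeg]
    have hv : ∀ c : ι, c.1 = v → v ∈ f c := fun c hc => hc ▸ (hfe c).2
    have hbij : (Finset.univ.filter (fun c : ι => c.1 = v)).card
        = (Finset.univ.filter (fun u =>
            (decide (G.Adj u v ∧ ∃ c : ι, c.1 = v ∧ f c = s(u, v))) = true)).card := by
      refine Finset.card_bij (fun c hc => Sym2.Mem.other' (hv c (Finset.mem_filter.mp hc).2)) ?_ ?_ ?_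
      · intro c hc
        have hcv := (Finset.mem_filter.mp hc).2
        have hmem := hv c hcv
        have hspec : s(v, Sym2.Mem.other' hmem) = f c := Sym2.other_spec' hmem
        have hadjv : G.Adj v (Sym2.Mem.other' hmem) := by
          have := (hfe c).1
          rw [← hspec] at this
          exact (SimpleGraph.mem_edgeFinset.mp this)
        refine Finset.mem_filter.mpr ⟨Finset.mem_univ _, decide_eq_true ?_⟩
        exact ⟨hadjv.symm, c, hcv, hspec.symm.trans Sym2.eq_swap⟩
      · intro c hc c' hc' heq
        apply hfinj
        have h1 := Sym2.other_spec' (hv c (Finset.mem_filter.mp hc).2)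
        have h2 := Sym2.other_spec' (hv c' (Finset.mem_filter.mp hc').2)
        have heq' : Sym2.Mem.other' (hv c (Finset.mem_filter.mp hc).2)
            = Sym2.Mem.other' (hv c' (Finset.mem_filter.mp hc').2) := heq
        rw [← h1, ← h2, heq']
      · intro u hu
        obtain ⟨hadj, c, hcv, hfc⟩ := of_decide_eq_true (Finset.mem_filter.mp hu).2
        refine ⟨c, Finset.mem_filter.mpr ⟨Finset.mem_univ _, hcv⟩, ?_⟩
        have hmem := hv c hcv
        have hspec : s(v, Sym2.Mem.other' hmem) = s(u, v) := by
          rw [Sym2.other_spec' hmem, hfc]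
        rcases Sym2.eq_iff.mp hspec with ⟨h1, h2⟩ | ⟨h1, h2⟩
        · exact absurd h1.symm hadj.ne
        · exact h2
    have hcount : (Finset.univ.filter (fun c : ι => c.1 = v)).card = (E' v).toNat := by
      have himg : (Finset.univ.filter (fun c : ι => c.1 = v))
          = Finset.univ.image (fun i : Fin ((E' v).toNat) => (⟨v, i⟩ : ι)) := by
        ext c
        simp only [Finset.mem_filter, Finset.mem_univ, true_and, Finset.mem_image]
        constructor
        · rintro rfl
          exact ⟨c.2, rfl⟩
        · rintro ⟨i, rfl⟩
          rfl
      rw [himg, Finset.card_image_of_injective _ sigma_mk_injective, Finset.card_univ,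
        Fintype.card_fin]
    rw [← hbij, hcount, Int.toNat_of_nonneg (hE' v)]

theorem linEquiv_shift (c : V → ℤ) {D D' : V → ℤ} (h : LinEquiv G D D') :
    LinEquiv G (fun v => D v + c v) (fun v => D' v + c v) := by
  obtain ⟨f, hf⟩ := h
  refine ⟨f, fun v => ?_⟩
  have := hf v
  simp only []
  linarith

theorem rank_nonneg_iff (hne : Nonempty V) (D : V → ℤ) :
    0 ≤ divisorRank G D ↔ ∃ E', EffectiveDiv E' ∧ LinEquiv G D E' := by
  classical
  set S := { n : ℕ | ∃ E : V → ℤ, EffectiveDiv E ∧ degDiv E = (n : ℤ) ∧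
      ¬ ∃ E' : V → ℤ, EffectiveDiv E' ∧ LinEquiv G (fun v => D v - E v) E' } with hS
  have hrank : divisorRank G D = ((sInf S : ℕ) : ℤ) - 1 := rfl
  have hSne : S.Nonempty := by
    obtain ⟨v0⟩ := hne
    set n0 := (degDiv D).toNat + 1 with hn0
    refine ⟨n0, fun v => if v = v0 then (n0 : ℤ) else 0, fun v => by positivity, ?_, ?_⟩
    · rw [degDiv]
      simp
    · rintro ⟨E', hE'eff, f, hf⟩
      have hdegE' : 0 ≤ ∑ v, E' v := Finset.sum_nonneg fun v _ => hE'eff v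
      have hdegsub : ∑ v, (D v - (if v = v0 then (n0 : ℤ) else 0)) = ∑ v, E' v :=
        linEquiv_degree G ⟨f, hf⟩
      rw [Finset.sum_sub_distrib] at hdegsub
      have h1 : ∑ v, (if v = v0 then (n0 : ℤ) else 0) = n0 := by simp
      have h2 : degDiv D < (n0 : ℤ) := by
        rw [hn0]; push_cast; omega
      rw [degDiv] at h2
      rw [h1] at hdegsub
      omega
  have hzero : 0 ∈ S ↔ ¬ ∃ E', EffectiveDiv E' ∧ LinEquiv G D E' := by
    constructor
    · rintro ⟨E, hEeff, hEdeg, hnot⟩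
      have hE0 : ∀ v, E v = 0 := by
        have hsum : ∑ v, E v = 0 := by rw [degDiv] at hEdeg; rw [hEdeg]; rfl
        have hall := (Finset.sum_eq_zero_iff_of_nonneg
          (s := (Finset.univ : Finset V)) (fun v _ => hEeff v)).mp hsum
        exact fun v => hall v (Finset.mem_univ v)
      have hfun : (fun v => D v - E v) = D := funext fun v => by rw [hE0 v]; ring
      rwa [hfun] at hnot
    · intro hno
      refine ⟨fun _ => 0, fun v => le_refl 0, by rw [degDiv]; simp, ?_⟩
      have hfun : (fun v => D v - 0) = D := funext fun v => by ring
      rwa [hfun]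
  rw [hrank]
  constructor
  · intro h
    by_contra hno
    have h0 : (0 : ℕ) ∈ S := hzero.mpr hno
    have : sInf S = 0 := Nat.sInf_eq_zero.mpr (Or.inl h0)
    omega
  · intro hyes
    have h0 : (0 : ℕ) ∉ S := fun hc => (hzero.mp hc) hyes
    have : sInf S ≠ 0 := by
      intro hc
      rcases Nat.sInf_eq_zero.mp hc with hc' | hc'
      · exact h0 hc'
      · rw [hc'] at hSne; exact Set.not_nonempty_empty hSne
    omega

end BackmanAux

/-- A divisor of degree at most `g - 1` is linearly equivalent to a
partially orientable divisor iff `r(D + 𝟙) ≥ 0`. -/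
theorem stmt8 {V : Type*} [Fintype V] [DecidableEq V] (G : SimpleGraph V)
    [DecidableRel G.Adj] (hG : G.Connected)
    (D : V → ℤ) (hD : degDiv D ≤ graphGenus G - 1) :
    (∃ O : PartialOrientation G, LinEquiv G D O.div) ↔
      0 ≤ divisorRank G (fun v => D v + 1) := by
  have hne : Nonempty V := hG.nonempty
  constructor
  · rintro ⟨O, hO⟩
    rw [rank_nonneg_iff G hne]
    refine ⟨fun v => (O.indeg v : ℤ), fun v => Int.natCast_nonneg _, ?_⟩
    have h1 := linEquiv_shift G (fun _ => (1 : ℤ)) hO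
    have h2 : (fun v => O.div v + (fun _ => (1 : ℤ)) v) = fun v => (O.indeg v : ℤ) :=
      funext fun v => by rw [PartialOrientation.div]; ring
    rwa [h2] at h1
  · intro hr
    rw [rank_nonneg_iff G hne] at hr
    obtain ⟨E0, hE0eff, hE0⟩ := hr
    have hdeg0 : ∑ v, E0 v ≤ (G.edgeFinset.card : ℤ) := by
      have hd : ∑ v, (D v + 1) = ∑ v, E0 v := linEquiv_degree G hE0
      have hsplit : ∑ v, (D v + 1) = ∑ v, D v + (Fintype.card V : ℤ) := by
        rw [Finset.sum_add_distrib]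
        simp [Finset.card_univ]
      rw [graphGenus, degDiv] at hD
      omega
    obtain ⟨E', hlin, hEeff, hall⟩ := main_exists G hG E0 hE0eff hdeg0
    obtain ⟨O, hO⟩ := orientation_of_hall G E' hEeff hall
    refine ⟨O, ?_⟩
    obtain ⟨f, hf⟩ := linEquiv_trans G hE0 hlin
    refine ⟨f, fun v => ?_⟩
    have := hf v
    have hdiv : O.div v = E' v - 1 := by rw [PartialOrientation.div, hO v]
    rw [hdiv]
    simp only [] at this ⊢
    linarith
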